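/- Let E ⊆ G be a Borel subset of the Cantor dyadic group and 0 < s < 1. If there exists a nonzero finite nonatomic Borel measure μ supported on E such that the series Σ_{k=0}^∞ \hatφ_s(k) (\hatμ(k))^2 converges, then the Hausdorff dimension of E (in the metric ρ) is at least s. -/

import Mathlib

/-!
Capping `φ_s` at its value `2^{sn}` on `G_n` gives a kernel that is constant on the cosets of
`G_n`, hence a Walsh polynomial of degree `< 2^n`; its `μ`-energy is
`∑_{k<2^n} φ̂ⁿ_s(k) μ̂(k)²` with `φ̂ⁿ_s(k) ≤ φ̂_s(k)`, so by monotone convergence the `s`-energy of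
`μ` is at most `∑ φ̂_s(k) μ̂(k)² < ∞`. Hence the potential is bounded by some `M` on a set `A` of
positive mass. A set `I` of diameter `< 2^{-n}` lies in one coset of `G_n`, on which the kernel is
at least `2^{sn}`, so `μ(I ∩ A) ≤ 2^s M (diam I)^s`, and the mass distribution principle gives
`H^t(E) = ∞` for every `t < s`.
-/

open MeasureTheory Filter Topology
open scoped ENNReal Classical

/-- The Cantor dyadic group: sequences of 0s and 1s with coordinatewise addition mod 2. -/
abbrev G : Type := ℕ → ZMod 2

/-- The metric ρ(x,y) = ∑_{i=1}^∞ 2^{-i} |x_i - y_i| (coordinates indexed from 0 here). -/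
noncomputable def rho (x y : G) : ℝ :=
  ∑' i : ℕ, (2:ℝ) ^ (-(i:ℝ) - 1) * (if x i = y i then 0 else 1)

/-- The subgroup G_n of sequences vanishing in the first n coordinates. -/
def Gset (n : ℕ) : Set G := {x | ∀ i < n, x i = 0}

/-- The coset K_n(x) = x + G_n of G_n containing x. -/
def Kset (n : ℕ) (x : G) : Set G := {y | x - y ∈ Gset n}

/-- The k-th Walsh function. -/
def walsh (k : ℕ) (x : G) : ℝ :=
  ∏ i ∈ Finset.range k, if k.testBit i ∧ x i = 1 then (-1 : ℝ) else 1

/-- The s-kernel: φ_s(0) = 0 and φ_s(x) = 2^{s(n-1)} for x ∈ G_{n-1} \ G_n,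
i.e. 2^{s j} where j is the first nonzero coordinate of x. -/
noncomputable def kernel (s : ℝ) (x : G) : ℝ :=
  if h : ∃ i, x i ≠ 0 then (2:ℝ) ^ (s * (Nat.find h : ℝ)) else 0

/-- The truncated s-kernel φ_s^n. -/
noncomputable def kernelTrunc (s : ℝ) (n : ℕ) (x : G) : ℝ :=
  if x = 0 then 0 else if x ∈ Gset n then (2:ℝ) ^ (s * (n:ℝ)) else kernel s x

/-- Walsh–Fourier coefficient of the s-kernel w.r.t. a (Haar) measure lam. -/
noncomputable def phiHat (s : ℝ) (lam : Measure G) (k : ℕ) : ℝ :=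
  ∫ x, kernel s x * walsh k x ∂lam

/-- Walsh–Fourier coefficient of the truncated s-kernel. -/
noncomputable def phiHatTrunc (s : ℝ) (n : ℕ) (lam : Measure G) (k : ℕ) : ℝ :=
  ∫ x, kernelTrunc s n x * walsh k x ∂lam

/-- Walsh–Fourier coefficient of a measure μ. -/
noncomputable def muHat (μ : Measure G) (k : ℕ) : ℝ :=
  ∫ x, walsh k x ∂μ

/-- s-potential of μ at x. -/
noncomputable def potential (s : ℝ) (μ : Measure G) (x : G) : ℝ≥0∞ :=
  ∫⁻ y, ENNReal.ofReal (kernel s (x - y)) ∂μ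

/-- s-energy of μ. -/
noncomputable def energy (s : ℝ) (μ : Measure G) : ℝ≥0∞ :=
  ∫⁻ x, ∫⁻ y, ENNReal.ofReal (kernel s (x - y)) ∂μ ∂μ

/-- truncated s-energy of μ. -/
noncomputable def energyTrunc (s : ℝ) (n : ℕ) (μ : Measure G) : ℝ≥0∞ :=
  ∫⁻ x, ∫⁻ y, ENNReal.ofReal (kernelTrunc s n (x - y)) ∂μ ∂μ

/-- Diameter of a set in the metric ρ, valued in ℝ≥0∞. -/
noncomputable def diamRho (I : Set G) : ℝ≥0∞ :=
  ⨆ x ∈ I, ⨆ y ∈ I, ENNReal.ofReal (rho x y)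

/-- Pre-Hausdorff measure H^s_δ via countable covers of ρ-diameter < δ. -/
noncomputable def Hdelta (s : ℝ) (δ : ℝ≥0∞) (A : Set G) : ℝ≥0∞ :=
  ⨅ (I : ℕ → Set G) (_ : A ⊆ ⋃ i, I i) (_ : ∀ i, diamRho (I i) < δ),
    ∑' i, diamRho (I i) ^ s

/-- s-dimensional Hausdorff measure w.r.t. the metric ρ. -/
noncomputable def Hmeas (s : ℝ) (A : Set G) : ℝ≥0∞ :=
  ⨆ (δ : ℝ≥0∞) (_ : 0 < δ), Hdelta s δ A

/-- Hausdorff dimension w.r.t. the metric ρ. -/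
noncomputable def hdimRho (A : Set G) : ℝ≥0∞ :=
  ⨆ (t : ℝ) (_ : Hmeas t A = ⊤), ENNReal.ofReal t

lemma zmod_two_cases (a : ZMod 2) : a = 0 ∨ a = 1 := by
  revert a; decide

lemma measurableSet_Gset (n : ℕ) : MeasurableSet (Gset n) := by
  have : Gset n = ⋂ i ∈ Finset.range n, (fun x : G => x i) ⁻¹' {0} := by
    ext x; simp [Gset]
  rw [this]
  exact .biInter (Finset.range n).countable_toSet fun i _ =>
    measurable_pi_apply i (MeasurableSet.singleton 0)

lemma zero_mem_Gset (n : ℕ) : (0 : G) ∈ Gset n := fun _ _ => rfl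

lemma add_mem_Gset {n : ℕ} {x y : G} (hx : x ∈ Gset n) (hy : y ∈ Gset n) : x + y ∈ Gset n :=
  fun i hi => by simp [hx i hi, hy i hi]

lemma Gset_antitone : Antitone Gset := fun _ _ h _ hx i hi => hx i (hi.trans_le h)

lemma Gset_succ (n : ℕ) : Gset (n + 1) = Gset n ∩ {x | x n = 0} := by
  ext x
  simp only [Gset, Set.mem_inter_iff, Set.mem_ofPred_eq, Nat.lt_succ_iff_lt_or_eq]
  exact ⟨fun h => ⟨fun i hi => h i (.inl hi), h n (.inr rfl)⟩,
    fun h i hi => hi.elim (h.1 i) fun e => e ▸ h.2⟩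

def GsetInvariant (n : ℕ) (f : G → ℝ) : Prop := ∀ x, ∀ g ∈ Gset n, f (x + g) = f x

section Walsh

private lemma prod_range_walsh_eq {k n m : ℕ} (hk : k < 2 ^ n) (hnm : n ≤ m) (x : G) :
    ∏ i ∈ Finset.range m, (if k.testBit i ∧ x i = 1 then (-1 : ℝ) else 1)
      = ∏ i ∈ Finset.range n, (if k.testBit i ∧ x i = 1 then (-1 : ℝ) else 1) := by
  refine (Finset.prod_subset (Finset.range_subset_range.2 hnm) fun i _ hi => ?_).symm
  have hni : n ≤ i := by simpa using hi
  simp [Nat.testBit_lt_two_pow (hk.trans_le (Nat.pow_le_pow_right two_pos hni))]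

lemma walsh_eq_prod_range {k n : ℕ} (hk : k < 2 ^ n) (x : G) :
    walsh k x = ∏ i ∈ Finset.range n, if k.testBit i ∧ x i = 1 then (-1 : ℝ) else 1 := by
  rw [walsh, ← prod_range_walsh_eq Nat.lt_two_pow_self (le_max_left k n),
    prod_range_walsh_eq hk (le_max_right k n)]

lemma walsh_add (k : ℕ) (x y : G) : walsh k (x + y) = walsh k x * walsh k y := by
  simp only [walsh, ← Finset.prod_mul_distrib, Pi.add_apply]
  refine Finset.prod_congr rfl fun i _ => ?_
  cases k.testBit i
  · simp
  · rcases zmod_two_cases (x i) with h | h <;> rcases zmod_two_cases (y i) with h' | h' <;>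
      simp [h, h', show (1 : ZMod 2) + 1 = 0 from rfl]

lemma abs_walsh_le_one (k : ℕ) (x : G) : |walsh k x| ≤ 1 := by
  rw [walsh, Finset.abs_prod]
  exact Finset.prod_le_one (fun _ _ => abs_nonneg _) fun i _ => by split_ifs <;> simp

lemma measurable_walsh (k : ℕ) : Measurable (walsh k) := by
  refine Finset.measurable_prod _ fun i _ => Measurable.ite ?_ measurable_const measurable_const
  cases k.testBit i
  · simp
  · simp only [true_and]
    exact measurable_pi_apply i (MeasurableSet.singleton 1)

lemma integrable_walsh (μ : Measure G) [IsFiniteMeasure μ] (k : ℕ) : Integrable (walsh k) μ :=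
  (integrable_const 1).mono' (measurable_walsh k).aestronglyMeasurable
    (Eventually.of_forall (abs_walsh_le_one k))

lemma walsh_zero (x : G) : walsh 0 x = 1 := by simp [walsh]

lemma walsh_single {k i : ℕ} (h : k.testBit i) : walsh k (Pi.single i (1 : ZMod 2)) = -1 := by
  have hik : i < k := Nat.lt_two_pow_self.trans_le (Nat.ge_two_pow_of_testBit h)
  rw [walsh, Finset.prod_eq_single_of_mem i (Finset.mem_range.2 hik) fun j _ hj => by
    simp [hj]]
  simp [h]

lemma walsh_of_mem_Gset {k n : ℕ} (hk : k < 2 ^ n) {x : G} (hx : x ∈ Gset n) : walsh k x = 1 := by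
  rw [walsh_eq_prod_range hk]
  exact Finset.prod_eq_one fun i hi => by simp [hx i (Finset.mem_range.1 hi)]

lemma walsh_two_pow_add {k n : ℕ} (hk : k < 2 ^ n) (x : G) :
    walsh (2 ^ n + k) x = walsh k x * if x n = 1 then -1 else 1 := by
  rw [walsh_eq_prod_range (n := n + 1) (by rw [pow_succ]; omega), Finset.prod_range_succ,
    walsh_eq_prod_range hk, Nat.testBit_two_pow_add_eq, Nat.testBit_lt_two_pow hk]
  congr 1
  refine Finset.prod_congr rfl fun i hi => ?_
  rw [Nat.testBit_two_pow_add_gt (Finset.mem_range.1 hi)]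
  simp

lemma sum_walsh (n : ℕ) (z : G) :
    ∑ k ∈ Finset.range (2 ^ n), walsh k z = (Gset n).indicator (fun _ => (2 : ℝ) ^ n) z := by
  induction n with
  | zero => simp [walsh, Gset]
  | succ n ih =>
    have hsplit : ∑ k ∈ Finset.range (2 ^ (n + 1)), walsh k z
        = (1 + if z n = 1 then -1 else 1) * ∑ k ∈ Finset.range (2 ^ n), walsh k z := by
      rw [pow_succ, mul_two, Finset.sum_range_add, add_mul, one_mul, Finset.mul_sum]
      congr 1
      exact Finset.sum_congr rfl fun k hk => by
        rw [walsh_two_pow_add (Finset.mem_range.1 hk), mul_comm]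
    rw [hsplit, ih, Gset_succ]
    by_cases hz : z ∈ Gset n
    · rcases zmod_two_cases (z n) with h | h
      · simp [Set.indicator, hz, h, pow_succ]
        ring
      · simp [Set.indicator, hz, h]
    · simp [Set.indicator, hz]

end Walsh

section Haar

variable (lam : Measure G) [IsProbabilityMeasure lam] [lam.IsAddLeftInvariant]

/-- Translating by `e_i` flips the sign of `w_k` when bit `i` of `k` is set. -/
lemma integral_walsh (k : ℕ) : ∫ x, walsh k x ∂lam = if k = 0 then 1 else 0 := by
  split_ifs with hk
  · simp [hk, walsh_zero]
  obtain ⟨i, hi⟩ := Nat.exists_testBit_of_ne_zero hk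
  have h := integral_add_left_eq_self (μ := lam) (walsh k) (Pi.single i 1)
  simp only [walsh_add, walsh_single hi, neg_one_mul, integral_neg] at h
  linarith

lemma measureReal_Gset (n : ℕ) : lam.real (Gset n) = 2⁻¹ ^ n := by
  have h := integral_finsetSum (μ := lam) (Finset.range (2 ^ n)) fun k _ => integrable_walsh lam k
  simp only [sum_walsh, integral_indicator_const _ (measurableSet_Gset n), integral_walsh,
    Finset.sum_ite_eq', Finset.mem_range, Nat.pos_of_ne_zero (pow_ne_zero n two_ne_zero),
    if_true, smul_eq_mul] at h
  rw [inv_pow, eq_inv_of_mul_eq_one_left h]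

lemma measure_Gset (n : ℕ) : lam (Gset n) = 2⁻¹ ^ n := by
  rw [← ofReal_measureReal, measureReal_Gset, ENNReal.ofReal_pow (by norm_num),
    ENNReal.ofReal_inv_of_pos two_pos, ENNReal.ofReal_ofNat]

lemma measure_singleton_zero : lam {0} = 0 := by
  refine le_antisymm (ge_of_tendsto' (ENNReal.tendsto_pow_atTop_nhds_zero_of_lt_one
    (by norm_num : (2⁻¹ : ℝ≥0∞) < 1)) fun n => ?_) zero_le
  rw [← measure_Gset lam n]
  exact measure_mono (Set.singleton_subset_iff.2 (zero_mem_Gset n))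

end Haar

section Kernel

def Gshell (j : ℕ) : Set G := Gset j \ Gset (j + 1)

lemma mem_Gshell_iff {j : ℕ} {x : G} : x ∈ Gshell j ↔ x ∈ Gset j ∧ x j ≠ 0 := by
  rw [Gshell, Gset_succ]
  simp

lemma mem_Gset_iff_le_of_mem_Gshell {j n : ℕ} {x : G} (hx : x ∈ Gshell j) :
    x ∈ Gset n ↔ n ≤ j :=
  ⟨fun h => not_lt.1 fun hjn => hx.2 (Gset_antitone hjn h), fun h => Gset_antitone h hx.1⟩

lemma Gshell_unique {i j : ℕ} {x : G} (hi : x ∈ Gshell i) (hj : x ∈ Gshell j) : i = j :=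
  le_antisymm ((mem_Gset_iff_le_of_mem_Gshell hj).1 hi.1)
    ((mem_Gset_iff_le_of_mem_Gshell hi).1 hj.1)

lemma exists_mem_Gshell {x : G} (hx : x ≠ 0) : ∃ j, x ∈ Gshell j := by
  have h : ∃ i, x i ≠ 0 := by simpa [funext_iff] using hx
  exact ⟨Nat.find h, mem_Gshell_iff.2 ⟨fun i hi => not_not.1 (Nat.find_min h hi), Nat.find_spec h⟩⟩

lemma kernel_of_mem_Gshell (s : ℝ) {j : ℕ} {x : G} (hx : x ∈ Gshell j) :
    kernel s x = 2 ^ (s * j) := by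
  obtain ⟨hxj, hx0⟩ := mem_Gshell_iff.1 hx
  have h : ∃ i, x i ≠ 0 := ⟨j, hx0⟩
  rw [kernel, dif_pos h, (Nat.find_eq_iff h).2 ⟨hx0, fun i hi => not_not.2 (hxj i hi)⟩]

lemma kernel_zero (s : ℝ) : kernel s 0 = 0 := by
  simp [kernel]

lemma kernel_nonneg (s : ℝ) (x : G) : 0 ≤ kernel s x := by
  rw [kernel]
  split_ifs <;> positivity

lemma kernel_eq_tsum (s : ℝ) (x : G) :
    kernel s x = ∑' j, (Gshell j).indicator (fun _ => (2 : ℝ) ^ (s * j)) x := by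
  by_cases hx : x = 0
  · subst hx
    simp [kernel_zero, Gshell, zero_mem_Gset]
  obtain ⟨j, hj⟩ := exists_mem_Gshell hx
  rw [kernel_of_mem_Gshell s hj, tsum_eq_single j fun i hi =>
    Set.indicator_of_notMem (fun h => hi (Gshell_unique h hj)) _, Set.indicator_of_mem hj]

lemma measurable_kernel (s : ℝ) : Measurable (kernel s) := by
  rw [funext (kernel_eq_tsum s)]
  exact Measurable.tsum fun j => measurable_const.indicator
    ((measurableSet_Gset j).diff (measurableSet_Gset (j + 1)))

lemma two_rpow_le_kernel {s : ℝ} (hs : 0 ≤ s) {n : ℕ} {x : G} (hx : x ∈ Gset n) (hx0 : x ≠ 0) :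
    (2 : ℝ) ^ (s * n) ≤ kernel s x := by
  obtain ⟨j, hj⟩ := exists_mem_Gshell hx0
  rw [kernel_of_mem_Gshell s hj]
  have : (n : ℝ) ≤ j := by exact_mod_cast (mem_Gset_iff_le_of_mem_Gshell hj).1 hx
  exact Real.rpow_le_rpow_of_exponent_le one_le_two (by nlinarith)

lemma kernel_le_two_rpow {s : ℝ} (hs : 0 ≤ s) {n : ℕ} {x : G} (hx : x ∉ Gset n) :
    kernel s x ≤ (2 : ℝ) ^ (s * n) := by
  obtain ⟨j, hj⟩ := exists_mem_Gshell fun (h : x = 0) => hx (h ▸ zero_mem_Gset n)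
  rw [kernel_of_mem_Gshell s hj]
  have : (j : ℝ) ≤ n := by exact_mod_cast (not_le.1 (mt (mem_Gset_iff_le_of_mem_Gshell hj).2 hx)).le
  exact Real.rpow_le_rpow_of_exponent_le one_le_two (by nlinarith)

lemma ofReal_two_rpow_mul (s : ℝ) (n : ℕ) :
    ENNReal.ofReal ((2 : ℝ) ^ (s * n)) = ((2 : ℝ≥0∞) ^ s) ^ n := by
  rw [← ENNReal.ofReal_ofNat 2, ENNReal.ofReal_rpow_of_pos two_pos, ← ENNReal.ofReal_pow
    (by positivity), ← Real.rpow_natCast, ← Real.rpow_mul zero_le_two]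

lemma ofReal_kernel_le_tsum (s : ℝ) (x : G) :
    ENNReal.ofReal (kernel s x) ≤ ∑' j, (Gset j).indicator (fun _ => ((2 : ℝ≥0∞) ^ s) ^ j) x := by
  by_cases hx : x = 0
  · simp [hx, kernel_zero]
  obtain ⟨j, hj⟩ := exists_mem_Gshell hx
  rw [kernel_of_mem_Gshell s hj, ofReal_two_rpow_mul]
  exact (Set.indicator_of_mem hj.1 (fun _ => ((2 : ℝ≥0∞) ^ s) ^ j)).symm.le.trans
    (ENNReal.le_tsum (f := fun j => (Gset j).indicator (fun _ => ((2 : ℝ≥0∞) ^ s) ^ j) x) j)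

lemma integrable_kernel (lam : Measure G) [IsProbabilityMeasure lam] [lam.IsAddLeftInvariant]
    {s : ℝ} (hs1 : s < 1) : Integrable (kernel s) lam := by
  refine ⟨(measurable_kernel s).aestronglyMeasurable, ?_⟩
  rw [hasFiniteIntegral_iff_ofReal (Eventually.of_forall (kernel_nonneg s))]
  have hr : (2 : ℝ≥0∞) ^ s * 2⁻¹ < 1 := by
    rw [← div_eq_mul_inv, ENNReal.div_lt_iff (by norm_num) (by norm_num), one_mul]
    simpa using ENNReal.rpow_lt_rpow_of_exponent_lt (by norm_num : (1 : ℝ≥0∞) < 2) (by norm_num) hs1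
  calc ∫⁻ x, ENNReal.ofReal (kernel s x) ∂lam
      ≤ ∫⁻ x, ∑' j, (Gset j).indicator (fun _ => ((2 : ℝ≥0∞) ^ s) ^ j) x ∂lam :=
        lintegral_mono (ofReal_kernel_le_tsum s)
    _ = ∑' j, ((2 : ℝ≥0∞) ^ s * 2⁻¹) ^ j := by
        rw [lintegral_tsum fun j =>
          (measurable_const.indicator (measurableSet_Gset j)).aemeasurable]
        simp [lintegral_indicator_const (measurableSet_Gset _), measure_Gset, mul_pow]
    _ < ⊤ := by
        rw [ENNReal.tsum_geometric]
        exact ENNReal.inv_lt_top.2 (tsub_pos_of_lt hr)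

end Kernel

/-- `phiHat s lam` is `walshCoeff lam (kernel s)` by definition. -/
noncomputable def walshCoeff (lam : Measure G) (f : G → ℝ) (k : ℕ) : ℝ := ∫ x, f x * walsh k x ∂lam

section Expansion

variable {lam : Measure G} [IsProbabilityMeasure lam] [lam.IsAddLeftInvariant]
  {f : G → ℝ} {n : ℕ}

/-- The Dirichlet kernel `∑_{k < 2^n} w_k(y + z) = 2^n 1_{G_n}(y + z)` averages `f` over the
coset `z + G_n`, on which `f` is constant. -/
theorem GsetInvariant.sum_walshCoeff_mul_walsh (hinv : GsetInvariant n f)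
    (hf : Integrable f lam) (z : G) :
    ∑ k ∈ Finset.range (2 ^ n), walshCoeff lam f k * walsh k z = f z := by
  have hint : ∀ k, Integrable (fun y => f y * walsh k y * walsh k z) lam := fun k =>
    (hf.mul_bdd (measurable_walsh k).aestronglyMeasurable
      (Eventually.of_forall fun y => (abs_walsh_le_one k y))).mul_const _
  have hcoset : ∀ y, f (z + y) * (Gset n).indicator (fun _ => (2 : ℝ) ^ n) (z + y + z)
      = (Gset n).indicator (fun _ => f z * 2 ^ n) y := by
    intro y
    rw [add_comm z y, add_assoc, CharTwo.add_self_eq_zero, add_zero]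
    by_cases hy : y ∈ Gset n
    · simp [hy, add_comm y z, hinv z y hy]
    · simp [hy]
  calc ∑ k ∈ Finset.range (2 ^ n), walshCoeff lam f k * walsh k z
      = ∫ y, f y * (Gset n).indicator (fun _ => (2 : ℝ) ^ n) (y + z) ∂lam := by
        simp only [walshCoeff, ← integral_mul_const]
        rw [← integral_finsetSum _ fun k _ => hint k]
        simp only [← sum_walsh, Finset.mul_sum, walsh_add, mul_assoc]
    _ = ∫ y, f (z + y) * (Gset n).indicator (fun _ => (2 : ℝ) ^ n) (z + y + z) ∂lam :=
        (integral_add_left_eq_self (fun y => f y * _) z).symm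
    _ = f z := by
        rw [integral_congr_ae (Eventually.of_forall hcoset),
          integral_indicator_const _ (measurableSet_Gset n), measureReal_Gset, smul_eq_mul,
          ← mul_assoc, mul_comm, ← mul_assoc, ← mul_pow]
        norm_num

variable (μ : Measure G) [IsFiniteMeasure μ]

lemma GsetInvariant.integrable_comp_sub (hinv : GsetInvariant n f) (hf : Integrable f lam)
    (x : G) : Integrable (fun y => f (x - y)) μ := by
  simp_rw [← hinv.sum_walshCoeff_mul_walsh hf, CharTwo.sub_eq_add, walsh_add, ← mul_assoc]
  exact integrable_finsetSum _ fun k _ => (integrable_walsh μ k).const_mul _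

lemma GsetInvariant.integral_comp_sub (hinv : GsetInvariant n f) (hf : Integrable f lam)
    (x : G) : ∫ y, f (x - y) ∂μ
      = ∑ k ∈ Finset.range (2 ^ n), walshCoeff lam f k * muHat μ k * walsh k x := by
  simp_rw [← hinv.sum_walshCoeff_mul_walsh hf, CharTwo.sub_eq_add, walsh_add, ← mul_assoc]
  rw [integral_finsetSum _ fun k _ => (integrable_walsh μ k).const_mul _]
  simp only [integral_const_mul, muHat]
  exact Finset.sum_congr rfl fun k _ => by ring

lemma GsetInvariant.integral_integral_comp_sub (hinv : GsetInvariant n f)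
    (hf : Integrable f lam) :
    ∫ x, ∫ y, f (x - y) ∂μ ∂μ
      = ∑ k ∈ Finset.range (2 ^ n), walshCoeff lam f k * muHat μ k ^ 2 := by
  simp_rw [hinv.integral_comp_sub μ hf]
  rw [integral_finsetSum _ fun k _ => (integrable_walsh μ k).const_mul _]
  simp only [integral_const_mul, muHat]
  exact Finset.sum_congr rfl fun k _ => by ring

lemma GsetInvariant.lintegral_lintegral_ofReal_comp_sub (hinv : GsetInvariant n f)
    (hf0 : ∀ x, 0 ≤ f x) (hf : Integrable f lam) :
    ∫⁻ x, ∫⁻ y, ENNReal.ofReal (f (x - y)) ∂μ ∂μ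
      = ENNReal.ofReal (∑ k ∈ Finset.range (2 ^ n), walshCoeff lam f k * muHat μ k ^ 2) := by
  have hinner : ∀ x, ∫⁻ y, ENNReal.ofReal (f (x - y)) ∂μ = ENNReal.ofReal (∫ y, f (x - y) ∂μ) :=
    fun x => (ofReal_integral_eq_lintegral_ofReal (hinv.integrable_comp_sub μ hf x)
      (Eventually.of_forall fun y => hf0 _)).symm
  have hint : Integrable (fun x => ∫ y, f (x - y) ∂μ) μ := by
    simp_rw [hinv.integral_comp_sub μ hf]
    exact integrable_finsetSum _ fun k _ => (integrable_walsh μ k).const_mul _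
  simp_rw [hinner]
  rw [← ofReal_integral_eq_lintegral_ofReal hint
    (Eventually.of_forall fun x => integral_nonneg fun y => hf0 _),
    hinv.integral_integral_comp_sub μ hf]

end Expansion

section CappedKernel

/-- Unlike `kernelTrunc`, this is constant on every coset of `G_n`, including `G_n` itself. -/
noncomputable def cappedKernel (s : ℝ) (n : ℕ) (x : G) : ℝ :=
  if x ∈ Gset n then 2 ^ (s * n) else kernel s x

variable {s : ℝ} {n : ℕ}

lemma measurable_cappedKernel (s : ℝ) (n : ℕ) : Measurable (cappedKernel s n) :=
  Measurable.ite (measurableSet_Gset n) measurable_const (measurable_kernel s)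

lemma cappedKernel_nonneg (x : G) : 0 ≤ cappedKernel s n x := by
  rw [cappedKernel]
  split_ifs
  exacts [by positivity, kernel_nonneg s x]

lemma cappedKernel_le (hs : 0 ≤ s) (x : G) : cappedKernel s n x ≤ 2 ^ (s * n) := by
  rw [cappedKernel]
  split_ifs with hx
  exacts [le_rfl, kernel_le_two_rpow hs hx]

lemma integrable_cappedKernel (hs : 0 ≤ s) (μ : Measure G) [IsFiniteMeasure μ] :
    Integrable (cappedKernel s n) μ :=
  (integrable_const _).mono' (measurable_cappedKernel s n).aestronglyMeasurable
    (Eventually.of_forall fun x => by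
      rw [Real.norm_of_nonneg (cappedKernel_nonneg x)]
      exact cappedKernel_le hs x)

lemma gsetInvariant_cappedKernel (s : ℝ) (n : ℕ) : GsetInvariant n (cappedKernel s n) := by
  intro x g hg
  by_cases hx : x ∈ Gset n
  · simp [cappedKernel, hx, add_mem_Gset hx hg]
  have hxg : x + g ∉ Gset n := fun h => hx <| by
    simpa [add_assoc, CharTwo.add_self_eq_zero] using add_mem_Gset h hg
  obtain ⟨j, hj⟩ := exists_mem_Gshell fun (h : x = 0) => hx (h ▸ zero_mem_Gset n)
  have hjn : j < n := not_le.1 (mt (mem_Gset_iff_le_of_mem_Gshell hj).2 hx)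
  have hgj : g ∈ Gset (j + 1) := Gset_antitone hjn hg
  have hxgj : x + g ∈ Gshell j := by
    refine mem_Gshell_iff.2 ⟨add_mem_Gset hj.1 (Gset_antitone j.le_succ hgj), ?_⟩
    simpa [hgj j j.lt_succ_self] using (mem_Gshell_iff.1 hj).2
  simp only [cappedKernel, hx, hxg, if_false, kernel_of_mem_Gshell s hj,
    kernel_of_mem_Gshell s hxgj]

lemma cappedKernel_mono (hs : 0 ≤ s) (x : G) : Monotone fun n => cappedKernel s n x := by
  refine monotone_nat_of_le_succ fun n => ?_
  by_cases hx : x ∈ Gset (n + 1)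
  · simp only [cappedKernel, hx, Gset_antitone n.le_succ hx, if_true]
    exact Real.rpow_le_rpow_of_exponent_le one_le_two (by push_cast; nlinarith)
  by_cases hxn : x ∈ Gset n
  · simp only [cappedKernel, hx, hxn, if_true, if_false]
    exact two_rpow_le_kernel hs hxn fun h => hx (h ▸ zero_mem_Gset _)
  · simp [cappedKernel, hx, hxn]

lemma ofReal_kernel_le_iSup_cappedKernel (s : ℝ) (x : G) :
    ENNReal.ofReal (kernel s x) ≤ ⨆ n, ENNReal.ofReal (cappedKernel s n x) := by
  by_cases hx : x = 0
  · simp [hx, kernel_zero]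
  obtain ⟨j, hj⟩ := exists_mem_Gshell hx
  have hj1 : x ∉ Gset (j + 1) := hj.2
  exact le_iSup_of_le (j + 1) (by simp [cappedKernel, hj1])

/-- For `k < 2^n`, `w_k = 1` on `G_n`, where `φ_s ≥ 2^{sn}` away from `0`; elsewhere the two
kernels agree. -/
lemma walshCoeff_cappedKernel_le_phiHat (lam : Measure G) [IsProbabilityMeasure lam]
    [lam.IsAddLeftInvariant] (hs : 0 ≤ s) (hs1 : s < 1) {k : ℕ} (hk : k < 2 ^ n) :
    walshCoeff lam (cappedKernel s n) k ≤ phiHat s lam k := by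
  have hint : ∀ f : G → ℝ, Integrable f lam → Integrable (fun x => f x * walsh k x) lam :=
    fun f hf => hf.mul_bdd (measurable_walsh k).aestronglyMeasurable
      (Eventually.of_forall fun y => abs_walsh_le_one k y)
  refine integral_mono_ae (hint _ (integrable_cappedKernel hs lam))
    (hint _ (integrable_kernel lam hs1)) ?_
  filter_upwards [measure_eq_zero_iff_ae_notMem.1 (measure_singleton_zero lam)] with x hx0
  by_cases hx : x ∈ Gset n
  · simp only [cappedKernel, hx, if_true, walsh_of_mem_Gset hk hx, mul_one]
    exact two_rpow_le_kernel hs hx hx0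
  · simp [cappedKernel, hx]

end CappedKernel

section Energy

variable {s : ℝ} (μ : Measure G)

noncomputable def cappedEnergy (s : ℝ) (n : ℕ) (μ : Measure G) : ℝ≥0∞ :=
  ∫⁻ x, ∫⁻ y, ENNReal.ofReal (cappedKernel s n (x - y)) ∂μ ∂μ

lemma cappedEnergy_mono (hs : 0 ≤ s) : Monotone fun n => cappedEnergy s n μ :=
  fun _ _ h => lintegral_mono fun _ => lintegral_mono fun _ =>
    ENNReal.ofReal_le_ofReal (cappedKernel_mono hs _ h)

lemma energy_le_iSup_cappedEnergy [SFinite μ] (hs : 0 ≤ s) :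
    energy s μ ≤ ⨆ n, cappedEnergy s n μ := by
  have hmeas : ∀ n, Measurable fun p : G × G => ENNReal.ofReal (cappedKernel s n (p.1 - p.2)) :=
    fun n => ((measurable_cappedKernel s n).comp (measurable_fst.sub measurable_snd)).ennreal_ofReal
  have hmono : ∀ x y, Monotone fun n => ENNReal.ofReal (cappedKernel s n (x - y)) :=
    fun x y _ _ h => ENNReal.ofReal_le_ofReal (cappedKernel_mono hs _ h)
  have hinner : ∀ x, ∫⁻ y, ⨆ n, ENNReal.ofReal (cappedKernel s n (x - y)) ∂μ
      = ⨆ n, ∫⁻ y, ENNReal.ofReal (cappedKernel s n (x - y)) ∂μ := fun x =>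
    lintegral_iSup (fun n => ((measurable_cappedKernel s n).comp
      (measurable_const.sub measurable_id)).ennreal_ofReal) fun _ _ h y => hmono x y h
  calc energy s μ
      ≤ ∫⁻ x, ∫⁻ y, ⨆ n, ENNReal.ofReal (cappedKernel s n (x - y)) ∂μ ∂μ :=
        lintegral_mono fun x => lintegral_mono fun y => ofReal_kernel_le_iSup_cappedKernel s _
    _ = ⨆ n, cappedEnergy s n μ := by
        simp_rw [hinner]
        exact lintegral_iSup (fun n => (hmeas n).lintegral_prod_right')
          fun _ _ h x => lintegral_mono fun y => hmono x y h

variable [IsFiniteMeasure μ] (lam : Measure G) [IsProbabilityMeasure lam] [lam.IsAddLeftInvariant]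

lemma cappedEnergy_le_ofReal_sum (hs : 0 ≤ s) (hs1 : s < 1) (n : ℕ) :
    cappedEnergy s n μ
      ≤ ENNReal.ofReal (∑ k ∈ Finset.range (2 ^ n), phiHat s lam k * muHat μ k ^ 2) := by
  rw [cappedEnergy, (gsetInvariant_cappedKernel s n).lintegral_lintegral_ofReal_comp_sub μ
    cappedKernel_nonneg (integrable_cappedKernel hs lam)]
  refine ENNReal.ofReal_le_ofReal (Finset.sum_le_sum fun k hk => ?_)
  exact mul_le_mul_of_nonneg_right
    (walshCoeff_cappedKernel_le_phiHat lam hs hs1 (Finset.mem_range.1 hk)) (sq_nonneg _)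

/-- By monotonicity in `n`, `cappedEnergy s n μ` is below the partial sum up to `2^m` for every
`m ≥ n`, and these partial sums tend to the series. -/
theorem energy_le_ofReal_tsum (hs : 0 ≤ s) (hs1 : s < 1)
    (hsum : Summable fun k => phiHat s lam k * muHat μ k ^ 2) :
    energy s μ ≤ ENNReal.ofReal (∑' k, phiHat s lam k * muHat μ k ^ 2) := by
  have htend : Tendsto (fun m => ENNReal.ofReal
      (∑ k ∈ Finset.range (2 ^ m), phiHat s lam k * muHat μ k ^ 2)) atTop
      (𝓝 (ENNReal.ofReal (∑' k, phiHat s lam k * muHat μ k ^ 2))) :=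
    ENNReal.tendsto_ofReal (hsum.hasSum.tendsto_sum_nat.comp
      (tendsto_pow_atTop_atTop_of_one_lt one_lt_two))
  refine (energy_le_iSup_cappedEnergy μ hs).trans (iSup_le fun n => ge_of_tendsto htend ?_)
  exact eventually_atTop.2 ⟨n, fun m hm =>
    (cappedEnergy_mono μ hs hm).trans (cappedEnergy_le_ofReal_sum μ lam hs hs1 m)⟩

end Energy

section Metric

lemma rho_term_eq (x y : G) (i : ℕ) :
    (2 : ℝ) ^ (-(i : ℝ) - 1) * (if x i = y i then 0 else 1)
      = if x i = y i then 0 else (2⁻¹ : ℝ) ^ (i + 1) := by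
  rw [show -(i : ℝ) - 1 = -((i + 1 : ℕ) : ℝ) by push_cast; ring, Real.rpow_neg zero_le_two,
    Real.rpow_natCast, inv_pow]
  split_ifs <;> simp

lemma sub_mem_Gset_of_rho_lt {x y : G} {n : ℕ} (h : rho x y < 2⁻¹ ^ n) : x - y ∈ Gset n := by
  intro i hi
  by_contra hne
  have hxy : x i ≠ y i := fun he => hne (by simp [he])
  have hsum : Summable fun i : ℕ => (2 : ℝ) ^ (-(i : ℝ) - 1) * (if x i = y i then 0 else 1) := by
    simp_rw [rho_term_eq]
    refine (summable_geometric_of_lt_one (by norm_num) (by norm_num : (2⁻¹ : ℝ) < 1))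
      |>.of_nonneg_of_le (fun i => by split_ifs <;> positivity) fun i => ?_
    split_ifs
    exacts [by positivity, pow_le_pow_of_le_one (by norm_num) (by norm_num) i.le_succ]
  have : (2⁻¹ : ℝ) ^ n ≤ rho x y :=
    calc (2⁻¹ : ℝ) ^ n ≤ 2⁻¹ ^ (i + 1) := pow_le_pow_of_le_one (by norm_num) (by norm_num) hi
      _ = (2 : ℝ) ^ (-(i : ℝ) - 1) * (if x i = y i then 0 else 1) := by
          rw [rho_term_eq, if_neg hxy]
      _ ≤ rho x y := hsum.le_tsum i fun j _ => by rw [rho_term_eq]; split_ifs <;> positivity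
  linarith

lemma subset_Kset_of_diamRho_lt {I : Set G} {x : G} (hx : x ∈ I) {n : ℕ}
    (hI : diamRho I < 2⁻¹ ^ n) : I ⊆ Kset n x := fun y hy => by
  refine sub_mem_Gset_of_rho_lt ((ENNReal.ofReal_lt_ofReal_iff' (q := 2⁻¹ ^ n)).1 ?_).1
  rw [ENNReal.ofReal_pow (by norm_num), ENNReal.ofReal_inv_of_pos two_pos, ENNReal.ofReal_ofNat]
  exact (le_iSup₂_of_le x hx <| le_iSup₂_of_le (f := fun y _ => ENNReal.ofReal (rho x y)) y hy
    le_rfl).trans_lt hI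

lemma eq_of_forall_mem_Kset {x y : G} (h : ∀ n, y ∈ Kset n x) : y = x := by
  refine (sub_eq_zero.1 (funext fun i => ?_)).symm
  exact h (i + 1) i i.lt_succ_self

end Metric

section Potential

variable {s : ℝ} (μ : Measure G)

lemma measurable_potential [SFinite μ] (s : ℝ) : Measurable (potential s μ) :=
  ((measurable_kernel s).comp (measurable_fst.sub measurable_snd)).ennreal_ofReal
    |>.lintegral_prod_right'

lemma exists_pos_measure_potential_le [SFinite μ] (hμ0 : μ ≠ 0) (henergy : energy s μ ≠ ⊤) :
    ∃ M : ℕ, 0 < μ {x | potential s μ x ≤ M} := by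
  by_contra! h
  have hnull : ∀ᵐ x ∂μ, x ∉ ⋃ M : ℕ, {x | potential s μ x ≤ M} :=
    measure_eq_zero_iff_ae_notMem.1 (measure_iUnion_null fun M => nonpos_iff_eq_zero.1 (h M))
  refine hμ0 (ae_eq_bot.1 (eventually_false_iff_eq_bot.1 ?_))
  filter_upwards [ae_lt_top (measurable_potential μ s) henergy, hnull] with x hx hxM
  obtain ⟨M, hM⟩ := ENNReal.exists_nat_gt hx.ne
  exact hxM (Set.mem_iUnion.2 ⟨M, hM.le⟩)

/-- Every `y ≠ x` in `K_n(x)` contributes at least `2^{sn}` to the potential at `x`. -/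
lemma measure_Kset_le_potential (hs : 0 ≤ s) (hna : ∀ x : G, μ {x} = 0) (n : ℕ) (x : G) :
    μ (Kset n x) ≤ ((2⁻¹ : ℝ≥0∞) ^ n) ^ s * potential s μ x := by
  have hr0 : ((2⁻¹ : ℝ≥0∞) ^ n) ^ s ≠ 0 := by simp
  have hrtop : ((2⁻¹ : ℝ≥0∞) ^ n) ^ s ≠ ⊤ := by simp
  have hc : ENNReal.ofReal ((2 : ℝ) ^ (s * n)) = (((2⁻¹ : ℝ≥0∞) ^ n) ^ s)⁻¹ := by
    rw [ofReal_two_rpow_mul, ← ENNReal.inv_rpow, ← ENNReal.inv_pow, inv_inv,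
      ← ENNReal.rpow_natCast, ← ENNReal.rpow_natCast, ← ENNReal.rpow_mul, ← ENNReal.rpow_mul,
      mul_comm]
  have hlow : ENNReal.ofReal ((2 : ℝ) ^ (s * n)) * μ (Kset n x) ≤ potential s μ x :=
    calc ENNReal.ofReal ((2 : ℝ) ^ (s * n)) * μ (Kset n x)
        = ∫⁻ _ in Kset n x \ {x}, ENNReal.ofReal ((2 : ℝ) ^ (s * n)) ∂μ := by
          rw [setLIntegral_const, measure_sdiff_null (hna x)]
      _ ≤ ∫⁻ y in Kset n x \ {x}, ENNReal.ofReal (kernel s (x - y)) ∂μ :=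
          setLIntegral_mono ((measurable_kernel s).comp
            (measurable_const.sub measurable_id)).ennreal_ofReal fun y hy =>
              ENNReal.ofReal_le_ofReal (two_rpow_le_kernel hs hy.1 (sub_ne_zero.2 (Ne.symm hy.2)))
      _ ≤ potential s μ x := setLIntegral_le_lintegral _ _
  rw [hc] at hlow
  calc μ (Kset n x) = ((2⁻¹ : ℝ≥0∞) ^ n) ^ s * ((((2⁻¹ : ℝ≥0∞) ^ n) ^ s)⁻¹ * μ (Kset n x)) := by
        rw [← mul_assoc, ENNReal.mul_inv_cancel hr0 hrtop, one_mul]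
    _ ≤ _ := by gcongr

end Potential

/-- Pick `n` with `2^{-(n+1)} ≤ diam I < 2^{-n}`; then `I` lies in one coset `K_n(x)`. -/
lemma measure_inter_le_of_potential_le {s : ℝ} (hs : 0 ≤ s) {μ : Measure G}
    (hna : ∀ x : G, μ {x} = 0) {A : Set G} {M : ℝ≥0∞} (hA : ∀ x ∈ A, potential s μ x ≤ M)
    {I : Set G} (hI : diamRho I < 1) : μ (I ∩ A) ≤ 2 ^ s * M * diamRho I ^ s := by
  rcases (I ∩ A).eq_empty_or_nonempty with h | ⟨x, hxI, hxA⟩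
  · simp [h]
  have hK : ∀ n, diamRho I < 2⁻¹ ^ n → μ (I ∩ A) ≤ ((2⁻¹ : ℝ≥0∞) ^ n) ^ s * M := fun n hn =>
    (measure_mono (Set.inter_subset_left.trans (subset_Kset_of_diamRho_lt hxI hn))).trans
      ((measure_Kset_le_potential μ hs hna n x).trans (by gcongr; exact hA x hxA))
  by_cases hex : ∃ n, (2⁻¹ : ℝ≥0∞) ^ (n + 1) ≤ diamRho I
  · have hlt : diamRho I < 2⁻¹ ^ Nat.find hex := by
      rcases Nat.eq_zero_or_eq_succ_pred (Nat.find hex) with h0 | hsucc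
      · simpa [h0] using hI
      · rw [hsucc]
        exact not_le.1 (Nat.find_min hex (Nat.pred_lt_self (Nat.pos_of_ne_zero
          fun h => by simp [h] at hsucc)))
    calc μ (I ∩ A) ≤ ((2⁻¹ : ℝ≥0∞) ^ Nat.find hex) ^ s * M := hK _ hlt
      _ = 2 ^ s * M * ((2⁻¹ : ℝ≥0∞) ^ (Nat.find hex + 1)) ^ s := by
        rw [pow_succ, ENNReal.mul_rpow_of_nonneg _ _ hs, ENNReal.inv_rpow,
          show ∀ a b c : ℝ≥0∞, a * b * (c * a⁻¹) = c * b * (a * a⁻¹) from fun _ _ _ => by ring,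
          ENNReal.mul_inv_cancel (by simp) (by simp), mul_one]
      _ ≤ 2 ^ s * M * diamRho I ^ s := by gcongr; exact Nat.find_spec hex
  · push Not at hex
    have hIx : I ⊆ {x} := fun y hy => eq_of_forall_mem_Kset fun n =>
      subset_Kset_of_diamRho_lt hxI ((hex n).trans_le (pow_le_pow_right_of_le_one'
        (by norm_num) n.le_succ)) hy
    calc μ (I ∩ A) ≤ μ {x} := measure_mono (Set.inter_subset_left.trans hIx)
      _ = 0 := hna x
      _ ≤ _ := zero_le

lemma ENNReal.rpow_le_rpow_sub_mul_rpow {d δ : ℝ≥0∞} {s t : ℝ} (hs : 0 < s) (hts : t ≤ s)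
    (hd : d < δ) : d ^ s ≤ δ ^ (s - t) * d ^ t := by
  rcases eq_or_ne d 0 with rfl | hd0
  · simp [ENNReal.zero_rpow_of_pos hs]
  calc d ^ s = d ^ (s - t) * d ^ t := by
        rw [← ENNReal.rpow_add _ _ hd0 hd.ne_top, sub_add_cancel]
    _ ≤ δ ^ (s - t) * d ^ t := by gcongr

theorem Hmeas_eq_top_of_measure_inter_le {μ : Measure G} {A E : Set G} {s t : ℝ} {C : ℝ≥0∞}
    (hs : 0 < s) (hts : t < s) (hC : C ≠ ⊤) (hAE : 0 < μ (A ∩ E))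
    (hA : ∀ I, diamRho I < 1 → μ (I ∩ A) ≤ C * diamRho I ^ s) : Hmeas t E = ⊤ := by
  by_contra hH
  have hB : Hmeas t E + 1 ≠ ⊤ := ENNReal.add_ne_top.2 ⟨hH, ENNReal.one_ne_top⟩
  have key : ∀ n : ℕ, μ (A ∩ E) ≤ C * (Hmeas t E + 1) * ((2⁻¹ : ℝ≥0∞) ^ n) ^ (s - t) := by
    intro n
    set δ : ℝ≥0∞ := 2⁻¹ ^ n
    have hδ : Hdelta t δ E < Hmeas t E + 1 :=
      (le_iSup₂ (f := fun δ (_ : 0 < δ) => Hdelta t δ E) δ (ENNReal.pow_pos (by norm_num) n))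
        |>.trans_lt (ENNReal.lt_add_right hH one_ne_zero)
    simp only [Hdelta, iInf_lt_iff] at hδ
    obtain ⟨I, hcov, hdiam, hsum⟩ := hδ
    calc μ (A ∩ E) ≤ ∑' i, μ (I i ∩ A) :=
          (measure_mono fun x hx => Set.mem_iUnion.2 <| (Set.mem_iUnion.1 (hcov hx.2)).imp
            fun i hi => (⟨hi, hx.1⟩ : x ∈ I i ∩ A)).trans (measure_iUnion_le _)
      _ ≤ ∑' i, C * δ ^ (s - t) * diamRho (I i) ^ t := ENNReal.tsum_le_tsum fun i =>
          (hA _ ((hdiam i).trans_le (pow_le_one₀ (by norm_num) (by norm_num)))).trans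
            (by rw [mul_assoc]; gcongr; exact ENNReal.rpow_le_rpow_sub_mul_rpow hs hts.le (hdiam i))
      _ = C * δ ^ (s - t) * ∑' i, diamRho (I i) ^ t := ENNReal.tsum_mul_left
      _ ≤ C * (Hmeas t E + 1) * δ ^ (s - t) := by
        rw [mul_right_comm]; gcongr
  have htend : Tendsto (fun n : ℕ => C * (Hmeas t E + 1) * ((2⁻¹ : ℝ≥0∞) ^ n) ^ (s - t)) atTop
      (𝓝 0) := by
    have := ENNReal.Tendsto.const_mul ((ENNReal.tendsto_pow_atTop_nhds_zero_of_lt_one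
      (by norm_num : (2⁻¹ : ℝ≥0∞) < 1)).ennrpow_const (s - t)) (.inr (ENNReal.mul_ne_top hC hB))
    rwa [ENNReal.zero_rpow_of_pos (by linarith), mul_zero] at this
  exact hAE.ne' (le_antisymm (ge_of_tendsto' htend key) zero_le)

lemma le_hdimRho_of_forall_Hmeas_eq_top {s : ℝ} {E : Set G}
    (h : ∀ t < s, Hmeas t E = ⊤) : ENNReal.ofReal s ≤ hdimRho E := by
  refine le_of_forall_lt fun c hc => ?_
  have hctop : c ≠ ⊤ := hc.ne_top
  obtain ⟨t, hct, hts⟩ := exists_between ((ENNReal.lt_ofReal_iff_toReal_lt hctop).1 hc)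
  exact ((ENNReal.lt_ofReal_iff_toReal_lt hctop).2 hct).trans_le (le_iSup₂_of_le t (h t hts) le_rfl)

theorem stmt17_general (s : ℝ) (hs : 0 < s) (hs1 : s < 1)
    (lam : Measure G) [IsProbabilityMeasure lam] [lam.IsAddLeftInvariant]
    (E : Set G)
    (μ : Measure G) [IsFiniteMeasure μ] (hμ0 : μ ≠ 0) (hna : ∀ x : G, μ {x} = 0)
    (hsupp : μ Eᶜ = 0)
    (hsum : Summable (fun k : ℕ => phiHat s lam k * (muHat μ k) ^ 2)) :
    ENNReal.ofReal s ≤ hdimRho E := by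
  have henergy : energy s μ ≠ ⊤ :=
    ne_top_of_le_ne_top ENNReal.ofReal_ne_top (energy_le_ofReal_tsum μ lam hs.le hs1 hsum)
  obtain ⟨M, hM⟩ := exists_pos_measure_potential_le μ hμ0 henergy
  have hfrostman : ∀ I, diamRho I < 1 →
      μ (I ∩ {x | potential s μ x ≤ M}) ≤ 2 ^ s * M * diamRho I ^ s :=
    fun I hI => measure_inter_le_of_potential_le hs.le hna (fun x hx => hx) hI
  refine le_hdimRho_of_forall_Hmeas_eq_top fun t hts =>
    Hmeas_eq_top_of_measure_inter_le hs hts ?_ ?_ hfrostman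
  · exact ENNReal.mul_ne_top (by simp) (ENNReal.natCast_ne_top M)
  · rwa [measure_inter_conull hsupp]

/-- If a nonzero finite nonatomic measure on E makes Σ \hatφ_s(k)(\hatμ(k))² converge,
then the Hausdorff dimension of E is at least s. -/
theorem stmt17 (s : ℝ) (hs : 0 < s) (hs1 : s < 1)
    (lam : Measure G) [IsProbabilityMeasure lam] [lam.IsAddLeftInvariant]
    (E : Set G) (hE : MeasurableSet E)
    (μ : Measure G) [IsFiniteMeasure μ] (hμ0 : μ ≠ 0) (hna : ∀ x : G, μ {x} = 0)
    (hsupp : μ Eᶜ = 0)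
    (hsum : Summable (fun k : ℕ => phiHat s lam k * (muHat μ k) ^ 2)) :
    ENNReal.ofReal s ≤ hdimRho E :=
  stmt17_general s hs hs1 lam E μ hμ0 hna hsupp hsum
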